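/- arXiv:2206.07119 — 3 statements merged into one kernel-verified Lean document; each statement's English description precedes it below -/
import Mathlib

section
/- Bias decomposition theorem: Let w, w* : S → ℝ have sample mean 1 over the nonempty finite set S, let Y : S → ℝ, and let ε = w − w* satisfy cov_S(w, ε) = 0 with var_S(w*) > 0 and var_S(ε) > 0, var_S(Y) > 0. Set R²_ε = var_S(ε)/var_S(w*) and ρ = cov_S(ε,Y)/sqrt(var_S(ε)var_S(Y)). If R²_ε < 1, then E_S[w·Y] − E_S[w*·Y] = ρ · sqrt( var_S(Y) · var_S(w) · R²_ε/(1 − R²_ε) ). -/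
open scoped BigOperators

variable {S : Type*} [Fintype S] [Nonempty S]

/-- Sample mean over the finite sample `S`. -/
noncomputable def mS (f : S → ℝ) : ℝ := (∑ i, f i) / (Fintype.card S : ℝ)

/-- Sample covariance over `S`. -/
noncomputable def covS (f g : S → ℝ) : ℝ := mS (fun i => f i * g i) - mS f * mS g

/-- Sample variance over `S`. -/
noncomputable def varS (f : S → ℝ) : ℝ := covS f f

/-! The bias is `E[ε Y] = cov(ε, Y)` because `ε` has mean zero, and the orthogonality
`cov(w, ε) = 0` gives the Pythagorean split `var w* = var w + var ε`, so that
`R²_ε / (1 - R²_ε) = var ε / var w`; the right-hand side therefore collapses to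
`ρ · √(var ε · var Y) = cov(ε, Y)`. -/

section SampleMoments

variable {ι : Type*} [Fintype ι]

theorem mS_sub (f g : ι → ℝ) : mS (fun i => f i - g i) = mS f - mS g := by
  simp only [mS, Finset.sum_sub_distrib, sub_div]

theorem covS_comm (f g : ι → ℝ) : covS f g = covS g f := by
  simp only [covS, mul_comm]

theorem covS_sub_left (f g h : ι → ℝ) :
    covS (fun i => f i - g i) h = covS f h - covS g h := by
  have hprod : mS (fun i => (f i - g i) * h i)
      = mS (fun i => f i * h i) - mS (fun i => g i * h i) := by
    simp only [sub_mul, mS_sub]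
  simp only [covS, hprod, mS_sub]
  ring

theorem covS_sub_right (f g h : ι → ℝ) :
    covS f (fun i => g i - h i) = covS f g - covS f h := by
  rw [covS_comm, covS_sub_left, covS_comm g, covS_comm h]

theorem covS_eq_mS_mul_of_mS_eq_zero {f : ι → ℝ} (hf : mS f = 0) (g : ι → ℝ) :
    covS f g = mS (fun i => f i * g i) := by
  simp only [covS, hf, zero_mul, sub_zero]

theorem varS_eq_add_varS_sub_of_covS_sub_eq_zero {f g : ι → ℝ}
    (h : covS f (fun i => f i - g i) = 0) :
    varS g = varS f + varS (fun i => f i - g i) := by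
  rw [covS_sub_right] at h
  simp only [varS, covS_sub_left, covS_sub_right, covS_comm g f]
  linarith

end SampleMoments

theorem div_div_one_sub_div {a : ℝ} (ha : a ≠ 0) (e : ℝ) :
    e / a / (1 - e / a) = e / (a - e) := by
  rw [one_sub_div ha, div_div_div_cancel_right₀ ha]

theorem bias_decomposition (w wstar Y : S → ℝ)
    (hw : mS w = 1) (hws : mS wstar = 1)
    (hproj : covS w (fun i => w i - wstar i) = 0)
    (hvws : 0 < varS wstar)
    (hveps : 0 < varS (fun i => w i - wstar i))
    (hvY : 0 < varS Y)
    (hR2 : varS (fun i => w i - wstar i) / varS wstar < 1) :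
    mS (fun i => w i * Y i) - mS (fun i => wstar i * Y i)
      = (covS (fun i => w i - wstar i) Y
            / Real.sqrt (varS (fun i => w i - wstar i) * varS Y))
        * Real.sqrt (varS Y * varS w *
            ((varS (fun i => w i - wstar i) / varS wstar)
              / (1 - varS (fun i => w i - wstar i) / varS wstar))) := by
  set ε : S → ℝ := fun i => w i - wstar i
  have hbias : mS (fun i => w i * Y i) - mS (fun i => wstar i * Y i) = covS ε Y := by
    have hmean : mS ε = 0 := by rw [mS_sub, hw, hws, sub_self]
    rw [covS_eq_mS_mul_of_mS_eq_zero hmean, ← mS_sub]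
    simp only [ε, sub_mul]
  have hvar : varS wstar - varS ε = varS w := by
    rw [varS_eq_add_varS_sub_of_covS_sub_eq_zero hproj, add_sub_cancel_right]
  have hvw : varS w ≠ 0 := by
    rw [← hvar]
    exact (sub_pos.mpr ((div_lt_one hvws).mp hR2)).ne'
  have hsqrt : Real.sqrt (varS ε * varS Y) ≠ 0 := (Real.sqrt_pos.mpr (by positivity)).ne'
  rw [hbias, div_div_one_sub_div hvws.ne', hvar, mul_assoc, mul_div_cancel₀ _ hvw,
    mul_comm (varS Y), div_mul_cancel₀ _ hsqrt]
end

section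
/- Robustness value calibration: Let a = (μ̂ − b*)²/(var_S(Y)·var_S(w)) > 0 and RV = (1/2)(sqrt(a²+4a) − a). If the sensitivity parameters satisfy R²_ε = RV and ρ_{ε,Y}² = RV (with sign of ρ equal to sign of μ̂ − b*), then the bias formula ρ_{ε,Y}·sqrt(var_S(Y)·var_S(w)·R²_ε/(1−R²_ε)) equals μ̂ − b*. -/
theorem robustness_value_calibration
    (muHat bStar vY vw R2 rho : ℝ)
    (hne : muHat ≠ bStar) (hvY : 0 < vY) (hvw : 0 < vw)
    (a : ℝ) (ha : a = (muHat - bStar) ^ 2 / (vY * vw))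
    (RV : ℝ) (hRV : RV = (1 / 2) * (Real.sqrt (a ^ 2 + 4 * a) - a))
    (hR2 : R2 = RV) (hrho2 : rho ^ 2 = RV)
    (hsign : Real.sign rho = Real.sign (muHat - bStar)) :
    rho * Real.sqrt (vY * vw * (R2 / (1 - R2))) = muHat - bStar := by
  subst hR2
  set d := muHat - bStar with hd
  have hdne : d ≠ 0 := sub_ne_zero.mpr hne
  have hvv : 0 < vY * vw := mul_pos hvY hvw
  have hd2 : 0 < d ^ 2 := by positivity
  have hapos : 0 < a := by rw [ha]; positivity
  set s := Real.sqrt (a ^ 2 + 4 * a) with hs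
  have hs0 : 0 ≤ s := Real.sqrt_nonneg _
  have hs2 : s ^ 2 = a ^ 2 + 4 * a := Real.sq_sqrt (by nlinarith)
  have hsgta : a < s := by nlinarith
  have hslt : s < a + 2 := by nlinarith
  have hRVpos : 0 < R2 := by rw [hRV]; linarith
  have hRVlt : R2 < 1 := by rw [hRV]; linarith
  have hkey : R2 ^ 2 = a * (1 - R2) := by rw [hRV]; nlinarith
  have h1RV : (0:ℝ) < 1 - R2 := by linarith
  have hda : d ^ 2 = a * (vY * vw) := by rw [ha]; field_simp
  have hval : R2 * (vY * vw * (R2 / (1 - R2))) = d ^ 2 := by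
    rw [hda]
    field_simp
    nlinarith [hkey]
  have hrhone : rho ≠ 0 := by
    intro h; rw [h] at hrho2; exact absurd hrho2.symm (by linarith)
  rcases lt_trichotomy d 0 with hdlt | hdeq | hdgt
  · -- d < 0, so sign rho = -1, rho < 0
    have hsd : Real.sign d = -1 := Real.sign_of_neg hdlt
    have hrlt : rho < 0 := by
      rcases lt_trichotomy rho 0 with h | h | h
      · exact h
      · exact absurd h hrhone
      · rw [Real.sign_of_pos h, hsd] at hsign; norm_num at hsign
    have hrv : rho = -Real.sqrt R2 := by
      rw [← hrho2, Real.sqrt_sq_eq_abs, abs_of_neg hrlt, neg_neg]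
    rw [hrv, neg_mul, ← Real.sqrt_mul hRVpos.le, hval,
      Real.sqrt_sq_eq_abs, abs_of_neg hdlt, neg_neg]
  · exact absurd hdeq hdne
  · have hsd : Real.sign d = 1 := Real.sign_of_pos hdgt
    have hrgt : 0 < rho := by
      rcases lt_trichotomy rho 0 with h | h | h
      · rw [Real.sign_of_neg h, hsd] at hsign; norm_num at hsign
      · exact absurd h hrhone
      · exact h
    have hrv : rho = Real.sqrt R2 := by
      rw [← hrho2, Real.sqrt_sq_eq_abs, abs_of_pos hrgt]
    rw [hrv, ← Real.sqrt_mul hRVpos.le, hval, Real.sqrt_sq_eq_abs, abs_of_pos hdgt]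
end

section
/- Killer confounder boundary: Fix c > 0 and a threshold level b > 0. The set of pairs (ρ, R²) ∈ (0,1]×[0,1) with ρ·c·sqrt(R²/(1−R²)) ≥ b is exactly the set of pairs with R² ≥ b²/(b² + ρ²c²). In particular, along the diagonal ρ² = R² = t the inequality becomes t²/(1−t) ≥ b²/c², whose boundary solution in (0,1) is the robustness value t = (1/2)(sqrt(a²+4a) − a) with a = b²/c². -/
/-!
Both sides of `b ≤ ρ c √(R²/(1-R²))` are nonnegative, so it is equivalent to its square
`b² (1 - R²) ≤ ρ² c² R²`, which is linear in `R²` and rearranges to `R² ≥ b² / (b² + ρ² c²)`.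
On the diagonal the squared inequality is `t² / (1 - t) ≥ a` with `a = b² / c²`, and the
boundary `t² = a (1 - t)` is a quadratic whose positive root is the robustness value.
-/

open Real

lemma le_mul_sqrt_iff_sq_le {b k u : ℝ} (hb : 0 ≤ b) (hk : 0 ≤ k) (hu : 0 ≤ u) :
    b ≤ k * √u ↔ b ^ 2 ≤ k ^ 2 * u := by
  rw [← le_sqrt hb (by positivity), sqrt_mul (sq_nonneg k), sqrt_sq hk]

lemma le_mul_div_one_sub_iff_div_add_le {B K x : ℝ} (hBK : 0 < B + K) (hx : x < 1) :
    B ≤ K * (x / (1 - x)) ↔ B / (B + K) ≤ x := by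
  rw [mul_div_assoc', le_div_iff₀ (by linarith), div_le_iff₀ hBK]
  constructor <;> intro h <;> linarith

lemma le_mul_sqrt_odds_iff {b k x : ℝ} (hb : 0 ≤ b) (hk : 0 < k) (hx : x ∈ Set.Ico (0 : ℝ) 1) :
    b ≤ k * √(x / (1 - x)) ↔ b ^ 2 / (b ^ 2 + k ^ 2) ≤ x := by
  rw [le_mul_sqrt_iff_sq_le hb hk.le (div_nonneg hx.1 (by linarith [hx.2]))]
  exact le_mul_div_one_sub_iff_div_add_le (by positivity) hx.2

/-- The robustness value attached to `a = b² / c²`: the positive root of `t² + a t - a`. -/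
noncomputable def robustnessValue (a : ℝ) : ℝ := 1 / 2 * (√(a ^ 2 + 4 * a) - a)

lemma robustnessValue_sq {a : ℝ} (ha : 0 ≤ a) :
    robustnessValue a ^ 2 = a * (1 - robustnessValue a) := by
  have hs : √(a ^ 2 + 4 * a) ^ 2 = a ^ 2 + 4 * a := sq_sqrt (by positivity)
  unfold robustnessValue
  linear_combination (1 / 4 : ℝ) * hs

lemma robustnessValue_mem_Ioo {a : ℝ} (ha : 0 < a) : robustnessValue a ∈ Set.Ioo (0 : ℝ) 1 := by
  have hs : √(a ^ 2 + 4 * a) ^ 2 = a ^ 2 + 4 * a := sq_sqrt (by positivity)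
  have hs0 : 0 ≤ √(a ^ 2 + 4 * a) := sqrt_nonneg _
  unfold robustnessValue
  constructor <;> nlinarith

lemma robustnessValue_sq_div_one_sub {a : ℝ} (ha : 0 < a) :
    robustnessValue a ^ 2 / (1 - robustnessValue a) = a := by
  have h1 : 0 < 1 - robustnessValue a := by linarith [(robustnessValue_mem_Ioo ha).2]
  rw [div_eq_iff h1.ne', robustnessValue_sq ha.le]

theorem killer_confounder_boundary (c b : ℝ) (hc : 0 < c) (hb : 0 < b) :
    ({p : ℝ × ℝ | p.1 ∈ Set.Ioc (0 : ℝ) 1 ∧ p.2 ∈ Set.Ico (0 : ℝ) 1 ∧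
        b ≤ p.1 * c * Real.sqrt (p.2 / (1 - p.2))}
      = {p : ℝ × ℝ | p.1 ∈ Set.Ioc (0 : ℝ) 1 ∧ p.2 ∈ Set.Ico (0 : ℝ) 1 ∧
        b ^ 2 / (b ^ 2 + p.1 ^ 2 * c ^ 2) ≤ p.2}) ∧
    (∀ t ∈ Set.Ioo (0 : ℝ) 1,
      (b ≤ Real.sqrt t * c * Real.sqrt (t / (1 - t)) ↔
        b ^ 2 / c ^ 2 ≤ t ^ 2 / (1 - t))) ∧
    (let a := b ^ 2 / c ^ 2
     let RV := (1 / 2) * (Real.sqrt (a ^ 2 + 4 * a) - a)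
     RV ∈ Set.Ioo (0 : ℝ) 1 ∧ RV ^ 2 / (1 - RV) = a) := by
  have ha : 0 < b ^ 2 / c ^ 2 := by positivity
  refine ⟨?_, ?_, robustnessValue_mem_Ioo ha, robustnessValue_sq_div_one_sub ha⟩
  · ext ⟨ρ, x⟩
    simp only [Set.mem_ofPred_eq, and_congr_right_iff]
    intro hρ hx
    rw [le_mul_sqrt_odds_iff hb.le (mul_pos hρ.1 hc) hx, mul_pow]
  · rintro t ⟨ht0, ht1⟩
    have h1 : 0 < 1 - t := by linarith
    rw [le_mul_sqrt_iff_sq_le hb.le (by positivity) (div_nonneg ht0.le h1.le), mul_pow,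
      sq_sqrt ht0.le, div_le_div_iff₀ (by positivity) h1, mul_div_assoc', le_div_iff₀ h1]
    constructor <;> intro h <;> linarith
end
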